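/- If z : ℝ → ℂ is differentiable and never zero, and r'(t) = z(t)², then the signed curvature of the plane curve r, given by κ = (x'·y'' − y'·x'')/((x')² + (y')²)^{3/2}, equals 2·Im(conj(z(t))·z'(t))/|z(t)|⁴. -/

import Mathlib

/-!
The velocity of `r` is `z²` and its acceleration `2 z z'`. For any velocity `u` and acceleration
`v`, the cross product `x'y'' - y'x''` is `Im (conj u * v)` and the speed is `‖u‖`; here
`conj (z²) · 2 z z' = 2 ‖z‖² conj z · z'` and `‖z²‖³ = ‖z‖⁶`, and cancelling `‖z‖²` gives
the formula.
-/

open ComplexConjugate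

theorem HasDerivAt.complex_re {f : ℝ → ℂ} {f' : ℂ} {x : ℝ} (h : HasDerivAt f f' x) :
    HasDerivAt (fun s => (f s).re) f'.re x :=
  Complex.reCLM.hasFDerivAt.comp_hasDerivAt x h

theorem HasDerivAt.complex_im {f : ℝ → ℂ} {f' : ℂ} {x : ℝ} (h : HasDerivAt f f' x) :
    HasDerivAt (fun s => (f s).im) f'.im x :=
  Complex.imCLM.hasFDerivAt.comp_hasDerivAt x h

theorem Complex.re_mul_im_sub_im_mul_re (u v : ℂ) :
    u.re * v.im - u.im * v.re = (conj u * v).im := by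
  simp only [mul_im, conj_re, conj_im]
  ring

theorem Complex.re_sq_add_im_sq_rpow_three_halves (u : ℂ) :
    (u.re ^ 2 + u.im ^ 2) ^ ((3 : ℝ) / 2) = ‖u‖ ^ 3 := by
  have hsq : u.re ^ 2 + u.im ^ 2 = ‖u‖ ^ 2 := by
    rw [Complex.sq_norm, normSq_apply]
    ring
  rw [hsq, ← Real.rpow_natCast, ← Real.rpow_mul (norm_nonneg u)]
  norm_num

theorem Complex.signedCurvature_eq (u v : ℂ) :
    (u.re * v.im - u.im * v.re) / (u.re ^ 2 + u.im ^ 2) ^ ((3 : ℝ) / 2) =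
      (conj u * v).im / ‖u‖ ^ 3 := by
  rw [re_mul_im_sub_im_mul_re, re_sq_add_im_sq_rpow_three_halves]

theorem Complex.im_conj_sq_mul_two_mul (z w : ℂ) :
    (conj (z ^ 2) * (2 * z * w)).im = 2 * ‖z‖ ^ 2 * (conj z * w).im := by
  have hprod : conj (z ^ 2) * (2 * z * w) = ((2 * ‖z‖ ^ 2 : ℝ) : ℂ) * (conj z * w) := by
    push_cast
    rw [map_pow]
    linear_combination (2 * conj z * w) * conj_mul' z
  rw [hprod, im_ofReal_mul]

theorem ph_curvature_general (z z' : ℝ → ℂ) (x'' y'' : ℝ → ℝ)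
    (hz : ∀ t, HasDerivAt z (z' t) t)
    (hz0 : ∀ t, z t ≠ 0)
    (hx'' : ∀ t, HasDerivAt (fun s => ((z s) ^ 2).re) (x'' t) t)
    (hy'' : ∀ t, HasDerivAt (fun s => ((z s) ^ 2).im) (y'' t) t) :
    ∀ t, (((z t) ^ 2).re * y'' t - ((z t) ^ 2).im * x'' t) /
        ((((z t) ^ 2).re ^ 2 + ((z t) ^ 2).im ^ 2) ^ ((3 : ℝ) / 2)) =
      2 * ((starRingEnd ℂ) (z t) * z' t).im / ‖z t‖ ^ 4 := by
  intro t
  have hw : HasDerivAt (fun s => z s ^ 2) (2 * z t * z' t) t := by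
    simpa [mul_comm] using (hz t).fun_pow 2
  rw [(hx'' t).unique hw.complex_re, (hy'' t).unique hw.complex_im, Complex.signedCurvature_eq,
    Complex.im_conj_sq_mul_two_mul, norm_pow]
  have hnorm : ‖z t‖ ≠ 0 := norm_ne_zero_iff.mpr (hz0 t)
  field_simp

/-- If r'(t) = z(t)² with z differentiable and nonvanishing, the signed
curvature (x'y'' − y'x'')/((x')²+(y')²)^{3/2} equals 2 Im(conj z · z')/|z|⁴. -/
theorem ph_curvature (z z' r : ℝ → ℂ) (x'' y'' : ℝ → ℝ)
    (hz : ∀ t, HasDerivAt z (z' t) t)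
    (hz0 : ∀ t, z t ≠ 0)
    (hr : ∀ t, HasDerivAt r ((z t) ^ 2) t)
    (hx'' : ∀ t, HasDerivAt (fun s => ((z s) ^ 2).re) (x'' t) t)
    (hy'' : ∀ t, HasDerivAt (fun s => ((z s) ^ 2).im) (y'' t) t) :
    ∀ t, (((z t) ^ 2).re * y'' t - ((z t) ^ 2).im * x'' t) /
        ((((z t) ^ 2).re ^ 2 + ((z t) ^ 2).im ^ 2) ^ ((3 : ℝ) / 2)) =
      2 * ((starRingEnd ℂ) (z t) * z' t).im / ‖z t‖ ^ 4 :=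
  ph_curvature_general z z' x'' y'' hz hz0 hx'' hy''
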